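/- arXiv:1307.2542 — 4 statements merged into one kernel-verified Lean document; each statement's English description precedes it below -/
import Mathlib

section
/- The Lie algebra of the stabilizer in GL(6,ℝ) of the three-form ρ₀ = e^{126} − e^{135} + e^{234} on ℝ⁶ consists exactly of the block matrices [[A, 0],[B, A − tr(A)·I₃]] with A ∈ gl(3,ℝ) and B ∈ sl(3,ℝ). -/
/-- The elementary alternating 3-form `e^{ijk}` on ℝ⁶ (for indices `i j k : Fin 6`),
`e^{ijk}(u,v,w) = det [[uᵢ,uⱼ,uₖ],[vᵢ,vⱼ,vₖ],[wᵢ,wⱼ,wₖ]]`. -/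
noncomputable def e3 (i j k : Fin 6) (u v w : Fin 6 → ℝ) : ℝ :=
  Matrix.det !![u i, u j, u k; v i, v j, v k; w i, w j, w k]

/-- The three-form `ρ₀ = e^{126} − e^{135} + e^{234}` on ℝ⁶ (0-based indices). -/
noncomputable def rho0 (u v w : Fin 6 → ℝ) : ℝ :=
  e3 0 1 5 u v w - e3 0 2 4 u v w + e3 1 2 3 u v w

/-!
Split `X` into `3 × 3` blocks `[[A, C], [B, D]]`. A direct computation shows that
`[[A, 0], [B, A - tr(A)·I₃]]` moves `ρ₀` to `-tr(B)·e^{123}`, and the action is linear in `X`, so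
`X.ρ₀ = 0` says that `Y = [[0, C], [0, D - A + tr(A)·I₃]]` moves `ρ₀` to `tr(B)·e^{123}`. As `Y`
kills `e₁, e₂, e₃`, evaluating at `(e₁, e₂, e₃)` gives `tr B = 0`; evaluating `Y.ρ₀ = 0` on the
remaining basis triples then reads off every entry of `Y` as zero.
-/

open Matrix

def infAction {R ι : Type*} [Ring R] [Fintype ι] (X : Matrix ι ι R)
    (ρ : (ι → R) → (ι → R) → (ι → R) → R) (u v w : ι → R) : R :=
  -ρ (X *ᵥ u) v w - ρ u (X *ᵥ v) w - ρ u v (X *ᵥ w)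

def fromBlocks₃ {R : Type*} (A B C D : Matrix (Fin 3) (Fin 3) R) : Matrix (Fin 6) (Fin 6) R :=
  reindex finSumFinEquiv finSumFinEquiv (fromBlocks A B C D)

section fromBlocks₃

variable {R : Type*}

theorem exists_eq_fromBlocks₃ (X : Matrix (Fin 6) (Fin 6) R) :
    ∃ A B C D, X = fromBlocks₃ A B C D := by
  set Y : Matrix (Fin 3 ⊕ Fin 3) (Fin 3 ⊕ Fin 3) R :=
    (reindex finSumFinEquiv finSumFinEquiv).symm X
  exact ⟨Y.toBlocks₁₁, Y.toBlocks₁₂, Y.toBlocks₂₁, Y.toBlocks₂₂, by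
    rw [fromBlocks₃, fromBlocks_toBlocks, Equiv.apply_symm_apply]⟩

theorem fromBlocks₃_add [Add R] (A B C D A' B' C' D' : Matrix (Fin 3) (Fin 3) R) :
    fromBlocks₃ A B C D + fromBlocks₃ A' B' C' D' =
      fromBlocks₃ (A + A') (B + B') (C + C') (D + D') := by
  rw [fromBlocks₃, fromBlocks₃, fromBlocks₃, ← fromBlocks_add]
  rfl

theorem fromBlocks₃_eq (A B C D : Matrix (Fin 3) (Fin 3) R) :
    fromBlocks₃ A B C D = !![A 0 0, A 0 1, A 0 2, B 0 0, B 0 1, B 0 2;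
      A 1 0, A 1 1, A 1 2, B 1 0, B 1 1, B 1 2;
      A 2 0, A 2 1, A 2 2, B 2 0, B 2 1, B 2 2;
      C 0 0, C 0 1, C 0 2, D 0 0, D 0 1, D 0 2;
      C 1 0, C 1 1, C 1 2, D 1 0, D 1 1, D 1 2;
      C 2 0, C 2 1, C 2 2, D 2 0, D 2 1, D 2 2] := by
  ext i j
  fin_cases i <;> fin_cases j <;> rfl

end fromBlocks₃

theorem infAction_rho0_add (X Y : Matrix (Fin 6) (Fin 6) ℝ) (u v w : Fin 6 → ℝ) :
    infAction (X + Y) rho0 u v w = infAction X rho0 u v w + infAction Y rho0 u v w := by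
  simp only [infAction, rho0, e3, add_mulVec, Pi.add_apply, det_fin_three, of_apply, cons_val',
    cons_val_zero, cons_val_one, cons_val, cons_val_fin_one]
  ring

theorem infAction_rho0_fromBlocks₃ (A B : Matrix (Fin 3) (Fin 3) ℝ) (u v w : Fin 6 → ℝ) :
    infAction (fromBlocks₃ A 0 B (A - A.trace • 1)) rho0 u v w = -B.trace * e3 0 1 2 u v w := by
  simp only [infAction, fromBlocks₃_eq, rho0, e3, det_fin_three, trace_fin_three, mulVec,
    dotProduct, Fin.sum_univ_six, Matrix.zero_apply, one_fin_three, smul_of, smul_cons, smul_eq_mul,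
    mul_one, mul_zero, smul_empty, Matrix.sub_apply, of_apply, cons_val', cons_val_zero,
    cons_val_one, cons_val, cons_val_fin_one]
  ring

theorem eq_zero_of_infAction_rho0_eq_mul_e3 {C D : Matrix (Fin 3) (Fin 3) ℝ} {t : ℝ}
    (h : ∀ u v w, infAction (fromBlocks₃ 0 C 0 D) rho0 u v w = t * e3 0 1 2 u v w) :
    t = 0 ∧ C = 0 ∧ D = 0 := by
  simp only [infAction, fromBlocks₃_eq, rho0, e3, det_fin_three, mulVec, dotProduct] at h
  have e (a b c : Fin 6) := h (Pi.single a 1) (Pi.single b 1) (Pi.single c 1)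
  simp only [Pi.single_apply, mul_ite, mul_one, mul_zero, Finset.sum_ite_eq', Finset.mem_univ,
    if_true] at e
  refine ⟨by simpa [eq_comm] using e 0 1 2, ?_, ?_⟩
  · have h02 : C 0 0 + C 2 2 = 0 := by simpa using e 1 3 5
    have h12 : -C 1 1 - C 2 2 = 0 := by simpa using e 0 4 5
    have h01 : -C 0 0 - C 1 1 = 0 := by simpa using e 2 3 4
    ext i j
    fin_cases i <;> fin_cases j
    exacts [by simp; linarith, by simpa using e 1 4 5, by simpa using e 2 4 5,
      by simpa using e 0 3 5, by simp; linarith, by simpa using e 2 3 5,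
      by simpa using e 0 3 4, by simpa using e 1 3 4, by simp; linarith]
  · ext i j
    fin_cases i <;> fin_cases j
    exacts [by simpa using e 1 2 3, by simpa using e 1 2 4, by simpa using e 1 2 5,
      by simpa using e 0 2 3, by simpa using e 0 2 4, by simpa using e 0 2 5,
      by simpa using e 0 1 3, by simpa using e 0 1 4, by simpa using e 0 1 5]

/-- `X ∈ gl(6,ℝ)` lies in the Lie algebra of the stabilizer of `ρ₀` (i.e. the infinitesimal
action `X.ρ₀` vanishes) if and only if `X` is a block matrix `[[A,0],[B,A − tr(A)·I₃]]`
with `A ∈ gl(3,ℝ)` and `B ∈ sl(3,ℝ)`. -/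
theorem stmt_0 (X : Matrix (Fin 6) (Fin 6) ℝ) :
    (∀ u v w : Fin 6 → ℝ,
        -rho0 (X.mulVec u) v w - rho0 u (X.mulVec v) w - rho0 u v (X.mulVec w) = 0)
    ↔ ∃ A B : Matrix (Fin 3) (Fin 3) ℝ, B.trace = 0 ∧
        X = Matrix.reindex finSumFinEquiv finSumFinEquiv
              (Matrix.fromBlocks A 0 B (A - A.trace • (1 : Matrix (Fin 3) (Fin 3) ℝ))) := by
  change (∀ u v w, infAction X rho0 u v w = 0) ↔
    ∃ A B, B.trace = 0 ∧ X = fromBlocks₃ A 0 B (A - A.trace • 1)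
  constructor
  · intro h
    obtain ⟨A, C, B, D, rfl⟩ := exists_eq_fromBlocks₃ X
    set E := A - A.trace • 1
    have hsplit : fromBlocks₃ A C B D = fromBlocks₃ A 0 B E + fromBlocks₃ 0 C 0 (D - E) := by
      rw [fromBlocks₃_add, add_zero, zero_add, add_zero, add_sub_cancel]
    obtain ⟨hB, rfl, hD⟩ := eq_zero_of_infAction_rho0_eq_mul_e3 (t := B.trace) fun u v w => by
      have hX := h u v w
      rw [hsplit, infAction_rho0_add, infAction_rho0_fromBlocks₃] at hX
      linarith
    exact ⟨A, B, hB, by rw [sub_eq_zero.mp hD]⟩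
  · rintro ⟨A, B, hB, rfl⟩ u v w
    rw [infAction_rho0_fromBlocks₃, hB, neg_zero, zero_mul]
end

section
/- Let A ∈ gl(3,ℝ) and B ∈ sl(3,ℝ), and set C = [[A,0],[B,A]] ∈ ℝ^{6×6}. Then the Jordan normal form of C cannot consist of Jordan blocks of sizes (3,1,1,1) with all eigenvalues zero; equivalently, it is impossible that C³ = 0, C² ≠ 0 and rank(C) = 2. -/
/-!
Write `C = [[A, 0], [B, A]]`. Projecting the range of `C` onto the first block gives the range
of `A`, and the part of the range lying in the second block contains `B (ker A) + range A`, so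
`rank C ≥ rank A + dim (B (ker A) + range A) ≥ 2 rank A`. Since `C² ≠ 0` forces `A ≠ 0`,
`rank C = 2` leaves only `rank A = 1` and `B (ker A) ⊆ range A`. Then `A = u vᵀ`, and `A³ = 0`
gives `v ⬝ u = 0`, i.e. `A² = 0`. The hyperplane `v^⊥` is mapped by `B` into the line through
`u`, so `B = u wᵀ + y vᵀ`, for which `AB + BA = (tr B) A`. As `tr B = 0`, the lower left block
`AB + BA` of `C²` vanishes too, so `C² = 0`.
-/

/-- The 6×6 block matrix [[A,0],[B,A]] built from two 3×3 blocks. -/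
noncomputable def blockC (A B : Matrix (Fin 3) (Fin 3) ℝ) : Matrix (Fin 6) (Fin 6) ℝ :=
  Matrix.reindex finSumFinEquiv finSumFinEquiv (Matrix.fromBlocks A 0 B A)

open Matrix Module Submodule LinearMap

namespace Matrix

variable {R K m n : Type*} [Fintype n]

theorem exists_eq_vecMulVec_of_mulVec_mem_span [CommSemiring R] [DecidableEq n]
    (M : Matrix m n R) (u : m → R) (h : ∀ x, M *ᵥ x ∈ R ∙ u) : ∃ w, M = vecMulVec u w := by
  choose w hw using fun j => mem_span_singleton.mp (h (Pi.single j 1))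
  refine ⟨w, ext fun i j => ?_⟩
  simpa [mulVec_single, vecMulVec_apply, mul_comm] using (congrFun (hw j) i).symm

theorem vecMulVec_mul_self [CommSemiring R] (u v : n → R) :
    vecMulVec u v * vecMulVec u v = (v ⬝ᵥ u) • vecMulVec u v := by
  rw [vecMulVec_mul_vecMulVec, vecMulVec_smul]

section Field

variable [Field K]

theorem rank_eq_zero_iff (A : Matrix m n K) : A.rank = 0 ↔ A = 0 := by
  rw [rank, Submodule.finrank_eq_zero, range_eq_bot, LinearMap.ext_iff, ext_iff_mulVec]
  simp

theorem exists_eq_vecMulVec_of_rank_eq_one [DecidableEq n] (A : Matrix m n K)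
    (h : A.rank = 1) : ∃ u v, A = vecMulVec u v := by
  have : finrank K (range A.mulVecLin) = 1 := h
  obtain ⟨u, -, hu⟩ := finrank_eq_one_iff'.mp this
  refine ⟨u, exists_eq_vecMulVec_of_mulVec_mem_span A u fun x => ?_⟩
  obtain ⟨c, hc⟩ := hu ⟨A *ᵥ x, x, rfl⟩
  exact mem_span_singleton.mpr ⟨c, congrArg Subtype.val hc⟩

theorem exists_eq_vecMulVec_add_vecMulVec [DecidableEq n] (B : Matrix m n K) {u : m → K}
    {v : n → K} (hv : v ≠ 0) (hB : ∀ x, v ⬝ᵥ x = 0 → B *ᵥ x ∈ K ∙ u) :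
    ∃ w y, B = vecMulVec u w + vecMulVec y v := by
  obtain ⟨j, hj⟩ : ∃ j, v j ≠ 0 := by simpa [funext_iff] using hv
  set x₀ : n → K := Pi.single j (v j)⁻¹
  have hx₀ : v ⬝ᵥ x₀ = 1 := by simp [x₀, hj]
  -- `x - (v ⬝ x) x₀` lies in `v^⊥`, so subtracting `(B x₀) vᵀ` leaves a map into `K ∙ u`
  obtain ⟨w, hw⟩ := exists_eq_vecMulVec_of_mulVec_mem_span (B - vecMulVec (B *ᵥ x₀) v) u
    fun x => by
      simpa [sub_mulVec, vecMulVec_mulVec, mulVec_sub, mulVec_smul] using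
        hB (x - (v ⬝ᵥ x) • x₀) (by simp [dotProduct_sub, hx₀])
  exact ⟨w, B *ᵥ x₀, by rw [← hw, sub_add_cancel]⟩

theorem vecMulVec_mul_add_mul_vecMulVec_eq_trace_smul [DecidableEq n] (B : Matrix n n K)
    {u v : n → K} (hvu : v ⬝ᵥ u = 0) (hB : ∀ x, v ⬝ᵥ x = 0 → B *ᵥ x ∈ K ∙ u) :
    vecMulVec u v * B + B * vecMulVec u v = B.trace • vecMulVec u v := by
  rcases eq_or_ne v 0 with rfl | hv
  · simp
  obtain ⟨w, y, rfl⟩ := exists_eq_vecMulVec_add_vecMulVec B hv hB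
  simp only [Matrix.mul_add, Matrix.add_mul, vecMulVec_mul_vecMulVec, hvu, trace_add,
    trace_vecMulVec, vecMulVec_smul, zero_smul, vecMulVec_zero]
  rw [dotProduct_comm y v, dotProduct_comm u w]
  module

theorem rank_add_finrank_map_ker_sup_range_le_rank_fromBlocks (A B : Matrix m n K) :
    A.rank + finrank K ↥(Submodule.map B.mulVecLin (ker A.mulVecLin) ⊔ range A.mulVecLin) ≤
      (fromBlocks A 0 B A).rank := by
  set W := range (fromBlocks A 0 B A).mulVecLin
  have hW : ∀ x y, Sum.elim (A *ᵥ x) (B *ᵥ x + A *ᵥ y) ∈ W := fun x y =>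
    ⟨Sum.elim x y, by simp [fromBlocks_mulVec]⟩
  set g := (funLeft K K Sum.inl).domRestrict W
  have hrange : range A.mulVecLin ≤ range g := by
    rintro _ ⟨x, rfl⟩
    exact ⟨⟨_, hW x 0⟩, rfl⟩
  have hker : Submodule.map B.mulVecLin (ker A.mulVecLin) ⊔ range A.mulVecLin ≤
      Submodule.map (funLeft K K Sum.inr ∘ₗ W.subtype) (ker g) := by
    refine sup_le ?_ ?_
    · rintro _ ⟨x, hx, rfl⟩
      exact ⟨⟨_, hW x 0⟩, by ext i; simpa [g] using congrFun hx i, by simp [funLeft]⟩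
    · rintro _ ⟨y, rfl⟩
      exact ⟨⟨_, hW 0 y⟩, by ext i; simp [g], by simp [funLeft]⟩
  calc A.rank + finrank K ↥(Submodule.map B.mulVecLin (ker A.mulVecLin) ⊔ range A.mulVecLin)
      ≤ finrank K (range g) + finrank K (ker g) :=
        add_le_add (Submodule.finrank_mono hrange)
          ((Submodule.finrank_mono hker).trans (Submodule.finrank_map_le _ _))
    _ = (fromBlocks A 0 B A).rank := g.finrank_range_add_finrank_ker

theorem rank_eq_one_and_map_ker_le_range_of_rank_fromBlocks_le_two {A B : Matrix m n K}
    (hA : A ≠ 0) (h : (fromBlocks A 0 B A).rank ≤ 2) :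
    A.rank = 1 ∧ Submodule.map B.mulVecLin (ker A.mulVecLin) ≤ range A.mulVecLin := by
  have hsum := rank_add_finrank_map_ker_sup_range_le_rank_fromBlocks A B
  set S := Submodule.map B.mulVecLin (ker A.mulVecLin) ⊔ range A.mulVecLin
  have hle : A.rank ≤ finrank K S := Submodule.finrank_mono le_sup_right
  have hpos : A.rank ≠ 0 := (rank_eq_zero_iff A).not.mpr hA
  have hrank : A.rank = 1 := by omega
  refine ⟨hrank, le_sup_left.trans (Submodule.eq_of_le_of_finrank_le le_sup_right ?_).ge⟩
  change finrank K S ≤ A.rank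
  omega

theorem fromBlocks_zero₁₂_sq [Fintype m] [DecidableEq m] [DecidableEq n] (A : Matrix m m K)
    (C : Matrix n m K) (D : Matrix n n K) :
    fromBlocks A 0 C D ^ 2 = fromBlocks (A * A) 0 (C * A + D * C) (D * D) := by
  simp [sq, fromBlocks_multiply]

end Field

end Matrix

theorem blockC_pow_eq_zero_iff (A B : Matrix (Fin 3) (Fin 3) ℝ) (k : ℕ) :
    blockC A B ^ k = 0 ↔ fromBlocks A 0 B A ^ k = 0 := by
  rw [← EmbeddingLike.map_eq_zero_iff (f := reindexAlgEquiv ℝ ℝ finSumFinEquiv), map_pow]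
  rfl

theorem rank_blockC (A B : Matrix (Fin 3) (Fin 3) ℝ) :
    (blockC A B).rank = (fromBlocks A 0 B A).rank :=
  rank_reindex _ _ _

/-- For `A ∈ gl(3,ℝ)` and `B ∈ sl(3,ℝ)`, the Jordan normal form of `C = [[A,0],[B,A]]`
cannot consist of nilpotent Jordan blocks of sizes (3,1,1,1): it is impossible that
`C³ = 0`, `C² ≠ 0` and `rank C = 2`. -/
theorem stmt_5 (A B : Matrix (Fin 3) (Fin 3) ℝ) (hB : B.trace = 0) :
    ¬ (blockC A B ^ 3 = 0 ∧ blockC A B ^ 2 ≠ 0 ∧ (blockC A B).rank = 2) := by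
  rintro ⟨h3, h2, hr⟩
  simp only [ne_eq, blockC_pow_eq_zero_iff, rank_blockC] at h3 h2 hr
  have hA : A ≠ 0 := by
    rintro rfl
    exact h2 (by simp [fromBlocks_zero₁₂_sq])
  obtain ⟨hrank, hBker⟩ := rank_eq_one_and_map_ker_le_range_of_rank_fromBlocks_le_two hA hr.le
  obtain ⟨u, v, rfl⟩ := exists_eq_vecMulVec_of_rank_eq_one _ hrank
  have hvu : v ⬝ᵥ u = 0 := by
    rw [pow_succ, fromBlocks_zero₁₂_sq, fromBlocks_multiply, ← fromBlocks_zero, fromBlocks_inj,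
      vecMulVec_mul_self, smul_mul_assoc, vecMulVec_mul_self, smul_smul] at h3
    simpa [hA] using h3.1
  have hBv : ∀ x, v ⬝ᵥ x = 0 → B *ᵥ x ∈ ℝ ∙ u := fun x hx => by
    obtain ⟨y, hy⟩ := hBker ⟨x, by simp [vecMulVec_mulVec, hx], rfl⟩
    exact mem_span_singleton.mpr ⟨v ⬝ᵥ y, by simpa [vecMulVec_mulVec] using hy⟩
  apply h2
  rw [fromBlocks_zero₁₂_sq, vecMulVec_mul_self, hvu, add_comm,
    vecMulVec_mul_add_mul_vecMulVec_eq_trace_smul B hvu hBv, hB]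
  simp
end

section
/- Let g be the 7-dimensional Lie algebra spanned by f₁,…,f₇ with nonzero brackets [f₃,f₇]=f₁, [f₄,f₇]=f₃, [f₅,f₇]=f₂, [f₆,f₇]=f₅. Then the three-form φ = −f^{156} − f^{236} + f^{245} − (1/2)f^{127} − f^{347} ∈ Λ³g* is closed with respect to the Chevalley–Eilenberg differential. -/
/-!
The Lie algebra is almost abelian: `[x, y] = f⁷(y) D x − f⁷(x) D y` with `D = [·, f₇]`.
For such brackets `dφ = f⁷ ∧ (D·φ)` up to sign, where `D·φ` is the derivation action of `D`.
Writing `φ = ρ + σ ∧ f⁷` with `ρ = −f^{156} − f^{236} + f^{245}`, one has `D·ρ = 0`, while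
`D·(σ ∧ f⁷)` is again divisible by `f⁷`; hence `f⁷ ∧ (D·φ) = 0`.
-/

/-- The Lie bracket of the 7-dimensional almost Abelian Lie algebra with nonzero brackets
`[f₃,f₇]=f₁, [f₄,f₇]=f₃, [f₅,f₇]=f₂, [f₆,f₇]=f₅` (0-based coordinates on ℝ⁷). -/
noncomputable def br (x y : Fin 7 → ℝ) : Fin 7 → ℝ :=
  ![x 2 * y 6 - x 6 * y 2,
    x 4 * y 6 - x 6 * y 4,
    x 3 * y 6 - x 6 * y 3,
    0,
    x 5 * y 6 - x 6 * y 5,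
    0, 0]

/-- The elementary alternating 3-form `f^{ijk}` on ℝ⁷. -/
noncomputable def f3 (i j k : Fin 7) (u v w : Fin 7 → ℝ) : ℝ :=
  Matrix.det !![u i, u j, u k; v i, v j, v k; w i, w j, w k]

/-- The three-form `φ = −f^{156} − f^{236} + f^{245} − (1/2)f^{127} − f^{347}`. -/
noncomputable def phi (u v w : Fin 7 → ℝ) : ℝ :=
  -f3 0 4 5 u v w - f3 1 2 5 u v w + f3 1 3 4 u v w
    - (1 / 2) * f3 0 1 6 u v w - f3 2 3 6 u v w

section AlmostAbelian

variable {R M : Type*} [CommRing R] [AddCommGroup M] [Module R M]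

def derivAct (D : M → M) (φ : M → M → M → R) (a b c : M) : R :=
  φ (D a) b c + φ a (D b) c + φ a b (D c)

theorem ceDifferential_eq_of_almostAbelian (t : M → R) (D : M → M) (φ : M → M → M → R)
    (hlin : ∀ (a b : R) (u v w z : M), φ (a • u - b • v) w z = a * φ u w z - b * φ v w z)
    (hswap₁₂ : ∀ u v w, φ u v w = -φ v u w) (hswap₂₃ : ∀ u v w, φ u v w = -φ u w v)
    (x₀ x₁ x₂ x₃ : M) :
    -φ (t x₁ • D x₀ - t x₀ • D x₁) x₂ x₃ + φ (t x₂ • D x₀ - t x₀ • D x₂) x₁ x₃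
        - φ (t x₃ • D x₀ - t x₀ • D x₃) x₁ x₂ - φ (t x₂ • D x₁ - t x₁ • D x₂) x₀ x₃
        + φ (t x₃ • D x₁ - t x₁ • D x₃) x₀ x₂ - φ (t x₃ • D x₂ - t x₂ • D x₃) x₀ x₁ =
      t x₀ * derivAct D φ x₁ x₂ x₃ - t x₁ * derivAct D φ x₀ x₂ x₃
        + t x₂ * derivAct D φ x₀ x₁ x₃ - t x₃ * derivAct D φ x₀ x₁ x₂ := by
  have hcycle : ∀ u v w, φ u v w = φ v w u := fun u v w => by
    rw [hswap₁₂, hswap₂₃, neg_neg]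
  simp only [hlin, derivAct]
  rw [hswap₁₂ (D x₂) x₁ x₃, hswap₁₂ (D x₁) x₀ x₃, hswap₁₂ (D x₂) x₀ x₃, hswap₁₂ (D x₁) x₀ x₂,
    hcycle (D x₃) x₁ x₂, hcycle (D x₃) x₀ x₂, hcycle (D x₃) x₀ x₁, hcycle (D x₂) x₀ x₁]
  ring

end AlmostAbelian

def bracketF7 (x : Fin 7 → ℝ) : Fin 7 → ℝ :=
  ![x 2, x 4, x 3, 0, x 5, 0, 0]

theorem br_eq_smul_sub (x y : Fin 7 → ℝ) :
    br x y = y 6 • bracketF7 x - x 6 • bracketF7 y := by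
  ext i
  fin_cases i <;> simp [br, bracketF7] <;> ring

theorem f3_apply (i j k : Fin 7) (u v w : Fin 7 → ℝ) :
    f3 i j k u v w = u i * (v j * w k - w j * v k) - v i * (u j * w k - w j * u k)
      + w i * (u j * v k - v j * u k) := by
  simp only [f3, Matrix.det_fin_three, Matrix.of_apply, Matrix.cons_val', Matrix.cons_val_zero,
    Matrix.cons_val_fin_one, Matrix.cons_val_one, Matrix.cons_val]
  ring

theorem phi_sub_smul (a b : ℝ) (u v w z : Fin 7 → ℝ) :
    phi (a • u - b • v) w z = a * phi u w z - b * phi v w z := by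
  simp only [phi, f3_apply, Pi.sub_apply, Pi.smul_apply, smul_eq_mul]
  ring

theorem phi_swap₁₂ (u v w : Fin 7 → ℝ) : phi u v w = -phi v u w := by
  simp only [phi, f3_apply]
  ring

theorem phi_swap₂₃ (u v w : Fin 7 → ℝ) : phi u v w = -phi u w v := by
  simp only [phi, f3_apply]
  ring

/-- The summand `−f^{156} − f^{236} + f^{245}` of `φ` is annihilated by `D`; only the
`f⁷`-part `−½ f^{127}` contributes. -/
theorem derivAct_bracketF7_phi (a b c : Fin 7 → ℝ) :
    derivAct bracketF7 phi a b c = (1 / 2) * f3 1 2 6 a b c - (1 / 2) * f3 0 4 6 a b c := by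
  simp only [derivAct, phi, f3_apply, bracketF7, Matrix.cons_val_zero, Matrix.cons_val_one,
    Matrix.cons_val]
  ring

theorem coord_wedge_f3_eq_zero (i j k : Fin 7) (x₀ x₁ x₂ x₃ : Fin 7 → ℝ) :
    x₀ k * f3 i j k x₁ x₂ x₃ - x₁ k * f3 i j k x₀ x₂ x₃
      + x₂ k * f3 i j k x₀ x₁ x₃ - x₃ k * f3 i j k x₀ x₁ x₂ = 0 := by
  simp only [f3_apply]
  ring

/-- `φ` is closed for the Chevalley–Eilenberg differential:
`(dφ)(x₀,x₁,x₂,x₃) = Σ_{i<j} (−1)^{i+j} φ([xᵢ,xⱼ], …) = 0`. -/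
theorem stmt_10 (x₀ x₁ x₂ x₃ : Fin 7 → ℝ) :
    -phi (br x₀ x₁) x₂ x₃ + phi (br x₀ x₂) x₁ x₃ - phi (br x₀ x₃) x₁ x₂
      - phi (br x₁ x₂) x₀ x₃ + phi (br x₁ x₃) x₀ x₂ - phi (br x₂ x₃) x₀ x₁ = 0 := by
  simp only [br_eq_smul_sub]
  rw [ceDifferential_eq_of_almostAbelian (fun x => x 6) bracketF7 phi phi_sub_smul phi_swap₁₂
    phi_swap₂₃]
  simp only [derivAct_bracketF7_phi]
  linear_combination (1 / 2 : ℝ) * coord_wedge_f3_eq_zero 1 2 6 x₀ x₁ x₂ x₃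
    - (1 / 2 : ℝ) * coord_wedge_f3_eq_zero 0 4 6 x₀ x₁ x₂ x₃
end

section
/- Let δ ∈ {−1,1}, B = (b_{ij}) ∈ ℝ^{2×2}, v = (v₁,v₂), w ∈ ℝ², N = [[0,δ],[0,0]], J = [[0,1],[−1,0]], and let F ∈ ℝ^{6×6} be the block matrix with rows/columns grouped as (1,1,2,2): F = [[0, −tr(B), vᵗ, wᵗ],[0,0,0,vᵗ],[0, Jv, N, B],[0,0,0,N]]. Then F is nilpotent, and the only possibly nonzero entry of F⁵ is F⁵[1,6] = −v₁³. In particular F⁵ ≠ 0 iff v₁ ≠ 0. -/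
/-!
Compute `F²` and `F³` entrywise. In `F⁵ = F³ F²` the only nonzero product of entries is
`F³[1,2] · F²[2,6] = (-δ v₁²)(δ v₁) = -δ² v₁³`; and since the last row of `F` vanishes,
`F⁶ = F⁵ F = 0`.
-/

/-- The 6×6 block matrix (block sizes 1,1,2,2)
`[[0, −tr B, vᵗ, wᵗ],[0,0,0,vᵗ],[0,Jv,N,B],[0,0,0,N]]` with `N=[[0,δ],[0,0]]`,
`J=[[0,1],[−1,0]]`. -/
noncomputable def Fmat (δ : ℝ) (B : Matrix (Fin 2) (Fin 2) ℝ) (v w : Fin 2 → ℝ) :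
    Matrix (Fin 6) (Fin 6) ℝ :=
  !![0, -B.trace, v 0, v 1, w 0, w 1;
     0, 0, 0, 0, v 0, v 1;
     0, v 1, 0, δ, B 0 0, B 0 1;
     0, -v 0, 0, 0, B 1 0, B 1 1;
     0, 0, 0, 0, 0, δ;
     0, 0, 0, 0, 0, 0]

namespace Matrix

variable {l m n α : Type*}

theorem single_eq_zero_iff [DecidableEq m] [DecidableEq n] [Zero α] {i : m} {j : n} {c : α} : single i j c = 0 ↔ c = 0 :=
  ⟨fun h => by simpa using congr_arg (fun M : Matrix m n α => M i j) h, fun h => h ▸ single_zero i j⟩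

theorem single_mul_eq_zero_of_row_eq_zero [DecidableEq l] [DecidableEq m] [Fintype m] [NonUnitalNonAssocSemiring α]
    (i : l) (j : m) (c : α) {M : Matrix m n α} (hM : M j = 0) : single i j c * M = 0 := by
  ext a b
  rcases eq_or_ne a i with rfl | ha
  · simp [hM]
  · exact single_mul_apply_of_ne c i j a b ha M

end Matrix

namespace Fmat

variable (δ : ℝ) (B : Matrix (Fin 2) (Fin 2) ℝ) (v w : Fin 2 → ℝ)

theorem sq_eq : Fmat δ B v w ^ 2 =
    !![0, 0, 0, δ * v 0, v 1 * B 1 0 - v 0 * B 1 1, δ * w 0 + v 0 * B 0 1 - v 1 * B 0 0;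
       0, 0, 0, 0, 0, δ * v 0;
       0, -(δ * v 0), 0, 0, v 0 * v 1 + δ * B 1 0, v 1 ^ 2 + δ * B.trace;
       0, 0, 0, 0, -v 0 ^ 2, δ * B 1 0 - v 0 * v 1;
       0, 0, 0, 0, 0, 0;
       0, 0, 0, 0, 0, 0] := by
  ext i j
  fin_cases i <;> fin_cases j <;>
    simp [sq, Fmat, Matrix.mul_apply, Fin.sum_univ_succ, Matrix.trace_fin_two] <;> ring

theorem pow_three_eq : Fmat δ B v w ^ 3 =
    !![0, -(δ * v 0 ^ 2), 0, 0, δ * v 0 * B 1 0, δ * v 1 * B 1 0;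
       0, 0, 0, 0, 0, 0;
       0, 0, 0, 0, -(δ * v 0 ^ 2), δ ^ 2 * B 1 0;
       0, 0, 0, 0, 0, -(δ * v 0 ^ 2);
       0, 0, 0, 0, 0, 0;
       0, 0, 0, 0, 0, 0] := by
  rw [pow_succ, sq_eq]
  ext i j
  fin_cases i <;> fin_cases j <;>
    simp [Fmat, Matrix.mul_apply, Fin.sum_univ_succ, Matrix.trace_fin_two] <;> ring

theorem pow_five_eq : Fmat δ B v w ^ 5 = Matrix.single 0 5 (-(δ ^ 2 * v 0 ^ 3)) := by
  rw [show Fmat δ B v w ^ 5 = Fmat δ B v w ^ 3 * Fmat δ B v w ^ 2 from pow_add _ 3 2,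
    pow_three_eq, sq_eq]
  ext i j
  fin_cases i <;> fin_cases j <;>
    simp [Matrix.mul_apply, Fin.sum_univ_succ]
  ring

theorem pow_six_eq_zero : Fmat δ B v w ^ 6 = 0 := by
  rw [pow_succ, pow_five_eq]
  refine Matrix.single_mul_eq_zero_of_row_eq_zero _ _ _ ?_
  ext j
  fin_cases j <;> rfl

end Fmat

/-- For `δ ∈ {−1,1}`, `F` is nilpotent and the only possibly nonzero entry of `F⁵` is
`F⁵[1,6] = −v₁³`; in particular `F⁵ ≠ 0` iff `v₁ ≠ 0`. -/
theorem stmt_14 (δ : ℝ) (hδ : δ = 1 ∨ δ = -1) (B : Matrix (Fin 2) (Fin 2) ℝ)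
    (v w : Fin 2 → ℝ) :
    IsNilpotent (Fmat δ B v w) ∧
    Fmat δ B v w ^ 5 = Matrix.single 0 5 (-(v 0) ^ 3) ∧
    (Fmat δ B v w ^ 5 ≠ 0 ↔ v 0 ≠ 0) := by
  have hδ_sq : δ ^ 2 = 1 := by rcases hδ with rfl | rfl <;> norm_num
  have h5 : Fmat δ B v w ^ 5 = Matrix.single 0 5 (-(v 0) ^ 3) := by
    rw [Fmat.pow_five_eq, hδ_sq, one_mul]
  refine ⟨⟨6, Fmat.pow_six_eq_zero δ B v w⟩, h5, ?_⟩
  rw [h5, Ne, Matrix.single_eq_zero_iff, neg_eq_zero, pow_eq_zero_iff three_ne_zero]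
end
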